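/- Let T be an X-tree, let L ⊆ binom(X,2) satisfy X = ∪_{c∈L} c, and let c = xx' ∈ L be a cord. Assume that for every subset A of X − {x,x'} for which A, X−A is a virtual T-split, the restriction of the graph Γ(L,c) to A is connected. Let ω be a proper edge weighting of T and let T' be another X-tree with proper edge weighting ω' such that (T,ω) and (T',ω') are L-isometric. Then D_ω(xx'|yy') = D_{ω'}(xx'|yy') holds for any two distinct elements y,y' ∈ X − {x,x'} with xx'∥yy' ∈ Q(T). -/

import Mathlib

/- Common definitions for formalizing results of Dress, Huber & Steel,
   "Lassoing a phylogenetic tree I: Basic properties, shellings, and covers".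

   Trees are modelled as simple graphs on an ambient vertex type `U`;
   the vertex set of the tree is the support of the graph (every vertex of a
   tree with at least two vertices has degree >= 1). -/

noncomputable section
open scoped Classical

namespace Lasso

variable {U : Type}

/-- The degree of a vertex. -/
def deg (G : SimpleGraph U) (v : U) : ℕ := (G.neighborSet v).ncard

/-- A leaf is a vertex of degree `1`. -/
def IsLeaf (G : SimpleGraph U) (v : U) : Prop := deg G v = 1

/-- An interior vertex: a non-leaf vertex of the tree. -/
def Interior (G : SimpleGraph U) (v : U) : Prop := v ∈ G.support ∧ ¬ IsLeaf G v

/-- `G` is an `X`-tree: a finite tree without vertices of degree two whose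
    leaf set is exactly `X`. -/
structure IsXTree (X : Set U) (G : SimpleGraph U) : Prop where
  support_finite : G.support.Finite
  support_nonempty : G.support.Nonempty
  connected : ∀ a ∈ G.support, ∀ b ∈ G.support, G.Reachable a b
  acyclic : G.IsAcyclic
  no_deg_two : ∀ v : U, deg G v ≠ 2
  leaves_eq : X = {v : U | IsLeaf G v}

/-- An edge weighting of `G`: nonnegative, and zero away from the edges of `G`
    (so that it represents an element of `ℝ_{≥0}^E`). -/
structure IsWeighting (G : SimpleGraph U) (ω : Sym2 U → ℝ) : Prop where
  nonneg : ∀ e, 0 ≤ ω e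
  zero_off : ∀ e, e ∉ G.edgeSet → ω e = 0

/-- A proper edge weighting: in addition strictly positive on interior edges
    (edges both of whose endpoints are non-leaves). -/
structure IsProperWeighting (G : SimpleGraph U) (ω : Sym2 U → ℝ)
    extends IsWeighting G ω : Prop where
  interior_pos : ∀ e ∈ G.edgeSet, (∀ u ∈ e, ¬ IsLeaf G u) → 0 < ω e

/-- The set `E_T(x|y)` of edges separating `x` from `y`, i.e. the edges lying
    on every walk from `x` to `y` (in a tree: the edges of the path). -/
def pathEdges (G : SimpleGraph U) (x y : U) : Set (Sym2 U) :=
  {e | e ∈ G.edgeSet ∧ ∀ p : G.Walk x y, e ∈ p.edges}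

/-- The induced distance `D_ω(x,y)`. -/
def tdist (G : SimpleGraph U) (ω : Sym2 U → ℝ) (x y : U) : ℝ :=
  ∑ᶠ e ∈ pathEdges G x y, ω e

/-- Path edge set of an unordered pair. -/
def pairPathEdges (G : SimpleGraph U) (c : Sym2 U) : Set (Sym2 U) :=
  {e | e ∈ G.edgeSet ∧ ∀ x y : U, c = s(x, y) → ∀ p : G.Walk x y, e ∈ p.edges}

/-- `D_ω` on an unordered pair (a cord); `λ^T_c(ω)`. -/
def pdist (G : SimpleGraph U) (ω : Sym2 U → ℝ) (c : Sym2 U) : ℝ :=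
  ∑ᶠ e ∈ pairPathEdges G c, ω e

/-- `(G,ω)` and `(G',ω')` are `L`-isometric. -/
def LIso (L : Set (Sym2 U)) (G : SimpleGraph U) (ω : Sym2 U → ℝ)
    (G' : SimpleGraph U) (ω' : Sym2 U → ℝ) : Prop :=
  ∀ x y : U, s(x, y) ∈ L → tdist G ω x y = tdist G' ω' x y

/-- `L` is a set of cords of `X`: 2-element subsets of `X`. -/
def IsCordSet (X : Set U) (L : Set (Sym2 U)) : Prop :=
  ∀ c ∈ L, ¬ c.IsDiag ∧ ∀ u ∈ c, u ∈ X

/-- The union of all cords in `L`. -/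
def cup (L : Set (Sym2 U)) : Set U := {v | ∃ c ∈ L, v ∈ c}

/-- `L` is an edge-weight lasso for `G`. -/
def EdgeWeightLasso (G : SimpleGraph U) (L : Set (Sym2 U)) : Prop :=
  ∀ ω ω' : Sym2 U → ℝ, IsProperWeighting G ω → IsProperWeighting G ω' →
    LIso L G ω G ω' → ω = ω'

/-- `G ≃ G'` via a graph isomorphism fixing `X` pointwise. -/
def FixingIso (X : Set U) (G G' : SimpleGraph U) : Prop :=
  ∃ φ : G ≃g G', ∀ x ∈ X, φ x = x

/-- `(G,ω)` and `(G',ω')` are isometric: a graph isomorphism fixing `X`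
    pointwise and preserving edge weights. -/
def FixingIsometry (X : Set U) (G G' : SimpleGraph U) (ω ω' : Sym2 U → ℝ) : Prop :=
  ∃ φ : G ≃g G', (∀ x ∈ X, φ x = x) ∧
    ∀ e ∈ G.edgeSet, ω' (Sym2.map (fun u => φ u) e) = ω e

/-- `L` is a topological lasso for the `X`-tree `G`. -/
def TopologicalLasso (X : Set U) (G : SimpleGraph U) (L : Set (Sym2 U)) : Prop :=
  ∀ G' : SimpleGraph U, IsXTree X G' →
    ∀ ω ω' : Sym2 U → ℝ, IsProperWeighting G ω → IsProperWeighting G' ω' →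
      LIso L G ω G' ω' → FixingIso X G G'

/-- `L` is a strong lasso for the `X`-tree `G`. -/
def StrongLasso (X : Set U) (G : SimpleGraph U) (L : Set (Sym2 U)) : Prop :=
  ∀ G' : SimpleGraph U, IsXTree X G' →
    ∀ ω ω' : Sym2 U → ℝ, IsProperWeighting G ω → IsProperWeighting G' ω' →
      LIso L G ω G' ω' → FixingIsometry X G G' ω ω'

/-- `G` displays the quartet `a a' ‖ b b'`: some edge lies on all four paths
    joining `a` or `a'` to `b` or `b'`. -/
def DisplaysQ (G : SimpleGraph U) (a a' b b' : U) : Prop :=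
  ∃ e : Sym2 U, e ∈ pathEdges G a b ∧ e ∈ pathEdges G a b' ∧
    e ∈ pathEdges G a' b ∧ e ∈ pathEdges G a' b'

def Distinct4 (a b c d : U) : Prop :=
  a ≠ b ∧ a ≠ c ∧ a ≠ d ∧ b ≠ c ∧ b ≠ d ∧ c ≠ d

/-- `a a' ‖ b b' ∈ Q(G)`: a quartet on four distinct elements of `X`
    displayed by `G`. -/
def QuartetOf (X : Set U) (G : SimpleGraph U) (a a' b b' : U) : Prop :=
  a ∈ X ∧ a' ∈ X ∧ b ∈ X ∧ b' ∈ X ∧ Distinct4 a a' b b' ∧ DisplaysQ G a a' b b'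

/-- `G` displays `a a' | b b'`: it displays neither `a b ‖ a' b'` nor
    `a b' ‖ a' b`. -/
def DisplaysBar (G : SimpleGraph U) (a a' b b' : U) : Prop :=
  ¬ DisplaysQ G a b a' b' ∧ ¬ DisplaysQ G a b' a' b

/-- `A, B` is a virtual `T`-split of `X`. -/
def VirtualSplit (X : Set U) (G : SimpleGraph U) (A B : Set U) : Prop :=
  A.Nonempty ∧ B.Nonempty ∧ Disjoint A B ∧ A ∪ B = X ∧
    ∀ a ∈ A, ∀ a' ∈ A, ∀ b ∈ B, ∀ b' ∈ B, a ≠ a' → b ≠ b' → DisplaysBar G a a' b b'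

/-- `G ≤ G'` (`G'` refines `G`), via the standard characterization
    `Q(T) ⊆ Q(T')` of refinement of `X`-trees. -/
def Refines (X : Set U) (G G' : SimpleGraph U) : Prop :=
  ∀ a a' b b' : U, QuartetOf X G a a' b b' → QuartetOf X G' a a' b b'

/-- `L` is a weak lasso for (coralls) the `X`-tree `G`. -/
def WeakLasso (X : Set U) (G : SimpleGraph U) (L : Set (Sym2 U)) : Prop :=
  ∀ G' : SimpleGraph U, IsXTree X G' →
    ∀ ω ω' : Sym2 U → ℝ, IsProperWeighting G ω → IsProperWeighting G' ω' →
      LIso L G ω G' ω' → Refines X G G'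

/-- The subgraph induced on a vertex set `A`. -/
def restrict {α : Type*} (Γ : SimpleGraph α) (A : Set α) : SimpleGraph α where
  Adj u v := Γ.Adj u v ∧ u ∈ A ∧ v ∈ A
  symm := ⟨by rintro u v ⟨h, hu, hv⟩; exact ⟨h.symm, hv, hu⟩⟩
  loopless := ⟨by rintro v ⟨h, _, _⟩; exact Γ.irrefl h⟩

/-- The restriction of `Γ` to `A` is a connected graph. -/
def ConnectedOn {α : Type*} (Γ : SimpleGraph α) (A : Set α) : Prop :=
  ∀ x ∈ A, ∀ y ∈ A, (restrict Γ A).Reachable x y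

/-- The connected component of `x` in `Γ` is bipartite. -/
def ComponentBipartite {α : Type*} (Γ : SimpleGraph α) (x : α) : Prop :=
  ∃ f : α → Bool, ∀ u v : α, Γ.Reachable x u → Γ.Adj u v → f u ≠ f v

/-- No connected component (of the graph with vertex set `S`) is bipartite. -/
def StronglyNonBipartite {α : Type*} (Γ : SimpleGraph α) (S : Set α) : Prop :=
  ∀ x ∈ S, ¬ ComponentBipartite Γ x

/-- The graph `Γ` is bipartite. -/
def Bipartite {α : Type*} (Γ : SimpleGraph α) : Prop :=
  ∃ f : α → Bool, ∀ u v : α, Γ.Adj u v → f u ≠ f v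

/-- `E_v`: the set of edges of `G` containing `v`. -/
def Ev (G : SimpleGraph U) (v : U) : Set (Sym2 U) := {e | e ∈ G.edgeSet ∧ v ∈ e}

/-- The graph `G(L,v)` on the edge set `E_v`: two distinct edges at `v` are
    adjacent if some cord of `L` has both on its path. -/
def covGraph (G : SimpleGraph U) (L : Set (Sym2 U)) (v : U) : SimpleGraph (Sym2 U) where
  Adj e e' := e ≠ e' ∧ e ∈ Ev G v ∧ e' ∈ Ev G v ∧
    ∃ x y : U, s(x, y) ∈ L ∧ e ∈ pathEdges G x y ∧ e' ∈ pathEdges G x y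
  symm := ⟨by
    rintro e e' ⟨hne, he, he', x, y, hc, hp, hp'⟩
    exact ⟨hne.symm, he', he, x, y, hc, hp', hp⟩⟩
  loopless := ⟨by rintro e ⟨hne, _⟩; exact hne rfl⟩

/-- `G(L,v)` is the complete graph on `E_v`. -/
def CompleteAt (G : SimpleGraph U) (L : Set (Sym2 U)) (v : U) : Prop :=
  ∀ e ∈ Ev G v, ∀ e' ∈ Ev G v, e ≠ e' → (covGraph G L v).Adj e e'

/-- `L` is a `t`-cover of `G`. -/
def TCover (X : Set U) (G : SimpleGraph U) (L : Set (Sym2 U)) : Prop :=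
  cup L = X ∧ ∀ v : U, Interior G v → CompleteAt G L v

/-- The graph `Γ(L, c)` for the cord `c = x x'`, with vertex set `X − {x,x'}`
    and edge set `L^(c)`. -/
def cordGraphC (X : Set U) (G : SimpleGraph U) (L : Set (Sym2 U)) (x x' : U) :
    SimpleGraph U where
  Adj y y' := y ≠ y' ∧ y ≠ x ∧ y ≠ x' ∧ y' ≠ x ∧ y' ≠ x' ∧
    s(y, y') ∈ L ∧ QuartetOf X G x x' y y' ∧
    ((s(x, y) ∈ L ∧ s(x', y') ∈ L) ∨ (s(x, y') ∈ L ∧ s(x', y) ∈ L))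
  symm := ⟨by
    rintro y y' ⟨hne, h1, h2, h3, h4, hL,
      ⟨hx1, hx2, hy1, hy2, ⟨d1, d2, d3, d4, d5, d6⟩, e, p1, p2, p3, p4⟩, hor⟩
    exact ⟨hne.symm, h3, h4, h1, h2, by rwa [Sym2.eq_swap],
      ⟨hx1, hx2, hy2, hy1, ⟨d1, d3, d2, d5, d4, d6.symm⟩, e, p2, p1, p4, p3⟩, hor.symm⟩⟩
  loopless := ⟨by rintro y ⟨hne, _⟩; exact hne rfl⟩

/-- `v` lies on the path of `G` from `x` to `y`. -/
def OnPath (G : SimpleGraph U) (x y v : U) : Prop :=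
  v = x ∨ v = y ∨ ∃ e ∈ pathEdges G x y, v ∈ e

/-- `v = med_G(a,b,c)`: `v` lies on all three pairwise paths. -/
def IsMedian (G : SimpleGraph U) (a b c v : U) : Prop :=
  OnPath G a b v ∧ OnPath G a c v ∧ OnPath G b c v

/-- `L` is a triplet cover of `G`. -/
def TripletCover (X : Set U) (G : SimpleGraph U) (L : Set (Sym2 U)) : Prop :=
  ∀ v : U, Interior G v → ∃ a b c : U, a ∈ X ∧ b ∈ X ∧ c ∈ X ∧
    a ≠ b ∧ a ≠ c ∧ b ≠ c ∧
    s(a, b) ∈ L ∧ s(a, c) ∈ L ∧ s(b, c) ∈ L ∧ IsMedian G a b c v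

/-- `L` is a pointed `x`-cover of `G`. -/
def PointedCover (X : Set U) (G : SimpleGraph U) (L : Set (Sym2 U)) (x : U) : Prop :=
  cup L = X ∧ (∀ v : U, Interior G v → CompleteAt G L v) ∧
    ∀ v : U, Interior G v → ∃ a b : U, a ≠ b ∧
      s(a, x) ∈ L ∧ s(b, x) ∈ L ∧ IsMedian G a b x v

/-- Every interior vertex has degree `3`. -/
def IsBinary (G : SimpleGraph U) : Prop := ∀ v : U, Interior G v → deg G v = 3

/-- `a, b` form a `T`-cherry with common neighbour `v`. -/
def IsCherry (G : SimpleGraph U) (a b v : U) : Prop :=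
  a ≠ b ∧ IsLeaf G a ∧ IsLeaf G b ∧ G.Adj a v ∧ G.Adj b v

/-- `a, b` form a proper `T`-cherry with common neighbour `v` of degree `3`. -/
def IsProperCherry (G : SimpleGraph U) (a b v : U) : Prop :=
  IsCherry G a b v ∧ deg G v = 3

/-- `W` is a `T`-core of `G`. -/
def IsCore (G : SimpleGraph U) (W : Set U) : Prop :=
  W.Nonempty ∧ W ⊆ G.support ∧
    (∀ a ∈ W, ∀ b ∈ W, (restrict G W).Reachable a b) ∧
    ∀ v ∈ W, deg (restrict G W) v = 1 ∨ deg (restrict G W) v = deg G v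

/-- `X_W`: the leaf set of the induced tree `T_W`. -/
def coreLeaves (G : SimpleGraph U) (W : Set U) : Set U :=
  {v | v ∈ W ∧ deg (restrict G W) v = 1}

/-- `g` is the gate of `x` in `W`: the vertex of `W` closest to `x`. -/
def IsGate (G : SimpleGraph U) (W : Set U) (x g : U) : Prop :=
  g ∈ W ∧ ∀ w ∈ W, OnPath G x w g

/-- `L_W`: the cords induced on the gates. -/
def gateCords (G : SimpleGraph U) (W : Set U) (L : Set (Sym2 U)) : Set (Sym2 U) :=
  {c | ∃ p q y y' : U, s(p, q) ∈ L ∧ IsGate G W p y ∧ IsGate G W q y' ∧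
       y ≠ y' ∧ c = s(y, y')}

/-- The gate map of the cherry reduction: `a, b ↦ v`, all else fixed. -/
def cherryMap (a b v : U) : U → U := fun p => if p = a ∨ p = b then v else p

/-- `L_U` for the cherry reduction at the proper cherry `a,b` with neighbour `v`. -/
def cherryLU (L : Set (Sym2 U)) (a b v : U) : Set (Sym2 U) :=
  {c | ∃ p q : U, s(p, q) ∈ L ∧ cherryMap a b v p ≠ cherryMap a b v q ∧
       c = s(cherryMap a b v p, cherryMap a b v q)}

/-- `X(a, L^{ab}) = {y : ay ∈ L − {ab}}`. -/
def sideSet (L : Set (Sym2 U)) (a b : U) : Set U :=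
  {y | s(a, y) ∈ L ∧ s(a, y) ≠ s(a, b)}

/-- `Σ_{c ∈ LU} ρ(c)·λ^{TU}_c = 0` as a linear form on `ℝ^{E_U}`. -/
def RhoAnnihilates (TU : SimpleGraph U) (LU : Set (Sym2 U)) (ρ : Sym2 U → ℝ) : Prop :=
  ∀ η : Sym2 U → ℝ, (∀ e, e ∉ TU.edgeSet → η e = 0) →
    ∑ᶠ c ∈ LU, ρ c * pdist TU η c = 0

/-- `D_ω(ab|cd)`. -/
def Dq (G : SimpleGraph U) (ω : Sym2 U → ℝ) (a b c d : U) : ℝ :=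
  max (tdist G ω a c + tdist G ω b d) (tdist G ω a d + tdist G ω b c)
    - tdist G ω a b - tdist G ω c d

/-- The star tree on `X` with central vertex `z`. -/
def starGraph (X : Set U) (z : U) : SimpleGraph U :=
  SimpleGraph.fromEdgeSet {c | ∃ x ∈ X, c = s(x, z)}

/-- `A ∨ B`: all cords with one end in `A` and the other in `B`. -/
def vee (A B : Set U) : Set (Sym2 U) := {c | ∃ a ∈ A, ∃ b ∈ B, c = s(a, b)}

/-- A `T`-shelling of `binom(X,2) − L` with cords `aᵢbᵢ` and pivots `pᵢ, qᵢ`. -/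
def IsShelling (X : Set U) (G : SimpleGraph U) (L : Set (Sym2 U)) (m : ℕ)
    (a b p q : Fin m → U) : Prop :=
  (∀ i, a i ∈ X ∧ b i ∈ X ∧ a i ≠ b i ∧ s(a i, b i) ∉ L) ∧
  Function.Injective (fun i => s(a i, b i)) ∧
  (∀ x y : U, x ∈ X → y ∈ X → x ≠ y → s(x, y) ∉ L → ∃ i, s(x, y) = s(a i, b i)) ∧
  ∀ i : Fin m,
    p i ∈ X ∧ q i ∈ X ∧ p i ≠ q i ∧
    p i ≠ a i ∧ p i ≠ b i ∧ q i ≠ a i ∧ q i ≠ b i ∧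
    DisplaysQ G (a i) (p i) (b i) (q i) ∧
    ∀ u w : U, u ∈ ({a i, b i, p i, q i} : Set U) → w ∈ ({a i, b i, p i, q i} : Set U) →
      u ≠ w → s(u, w) ≠ s(a i, b i) →
      (s(u, w) ∈ L ∨ ∃ j : Fin m, j < i ∧ s(u, w) = s(a j, b j))

/-- `L` is an `s`-lasso for `G`. -/
def SLasso (X : Set U) (G : SimpleGraph U) (L : Set (Sym2 U)) : Prop :=
  cup L = X ∧ ∃ (m : ℕ) (a b p q : Fin m → U), IsShelling X G L m a b p q

/-- `L'_{A,B}` of Corollary 3 (the cherry construction). -/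
def LAB (L' : Set (Sym2 U)) (X : Set U) (a b : U) (A B : Set U) : Set (Sym2 U) :=
  {c | c ∈ L' ∧ ∀ u ∈ c, u ∈ X ∧ u ≠ a ∧ u ≠ b} ∪
  {c | ∃ x ∈ A ∪ {b}, c = s(a, x)} ∪
  {c | ∃ x ∈ B, c = s(b, x)}

end Lasso
namespace Lasso

/-!
Write `M(a, b)` for the set of edges separating `{x, x'}` from `{a, b}`. In a tree
`D_ω(xx'|ab) = 2 ω(M(a, b))`, and the sets `M(a, b)` behave like the balls of an ultrametric:
if `M(b, r) ⊊ M(a, r)` then `M(a, b) = M(b, r)`.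

For an edge `uv` of `Γ(L, xx')` the cords `xx', xu, x'v, uv` lie in `L`, so
`D(x, u) + D(x', v) - D(x, x') - D(u, v)` is the same in both trees. Since `M(u, v) ≠ ∅`, in `T`
this number is `2 ω(M(u, v)) > 0`, and being positive it is `2 ω'(M'(u, v))` in `T'`.

For general `y, y'` let `A` be the set of leaves `z` with `M(y, y') ⊊ M(z, y)` or
`M(y, y') ⊊ M(z, y')`. Then `A, X - A` is a virtual split, so `Γ` restricted to `A` joins the
`y`-part of `A` to its `y'`-part by an edge `uv`, and `M(u, v) = M(y, y')`. By induction on `|A|`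
the weights agree for `y, u` and for `v, y'`; as `ω(M(y, u)) > ω(M(u, v))`, the ultrametric
property in `T'` gives `M'(y, v) = M'(u, v)`, and likewise `M'(y, y') = M'(y, v)`.
-/

variable {U : Type}

theorem _root_.SimpleGraph.Reachable.reachable_deleteEdges_or {V : Type*} {G : SimpleGraph V}
    {a u v : V} (h : G.Reachable a u) :
    (G.deleteEdges {s(u, v)}).Reachable a u ∨ (G.deleteEdges {s(u, v)}).Reachable a v := by
  obtain ⟨w⟩ := h
  induction w with
  | nil => exact Or.inl (SimpleGraph.Reachable.refl _)
  | @cons p q t hpq _ ih =>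
    by_cases hedge : s(p, q) = s(t, v)
    · rcases Sym2.eq_iff.mp hedge with ⟨rfl, -⟩ | ⟨rfl, -⟩
      exacts [Or.inl (SimpleGraph.Reachable.refl _), Or.inr (SimpleGraph.Reachable.refl _)]
    · have hadj : (G.deleteEdges {s(t, v)}).Adj p q := by simp [hpq, hedge]
      exact ih.imp hadj.reachable.trans hadj.reachable.trans

section PathEdges

variable {X : Set U} {G : SimpleGraph U}

theorem pathEdges_comm (G : SimpleGraph U) (a b : U) : pathEdges G a b = pathEdges G b a := by
  ext e
  constructor <;>
  · rintro ⟨he, hall⟩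
    exact ⟨he, fun p => by simpa using hall p.reverse⟩

theorem ne_of_mem_pathEdges {a b : U} {e : Sym2 U} (he : e ∈ pathEdges G a b) : a ≠ b := by
  rintro rfl
  simpa using he.2 .nil

theorem mem_pathEdges_iff_not_reachable {a b : U} {e : Sym2 U} (he : e ∈ G.edgeSet) :
    e ∈ pathEdges G a b ↔ ¬ (G.deleteEdges {e}).Reachable a b := by
  induction e using Sym2.ind with
  | h u v =>
    rw [SimpleGraph.reachable_deleteEdges_iff_exists_walk]
    simp [pathEdges, he]

theorem IsXTree.reachable_deleteEdges_iff (hT : IsXTree X G) {u v a b : U} (huv : G.Adj u v)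
    (ha : a ∈ G.support) (hb : b ∈ G.support) :
    (G.deleteEdges {s(u, v)}).Reachable a b ↔
      ((G.deleteEdges {s(u, v)}).Reachable a u ↔ (G.deleteEdges {s(u, v)}).Reachable b u) := by
  have hbridge : ¬ (G.deleteEdges {s(u, v)}).Reachable u v :=
    SimpleGraph.isBridge_iff.mp (SimpleGraph.isAcyclic_iff_forall_adj_isBridge.mp hT.acyclic huv)
  have hu : u ∈ G.support := huv.mem_support_left
  have hau := SimpleGraph.Reachable.reachable_deleteEdges_or (v := v) (hT.connected a ha u hu)
  have hbu := SimpleGraph.Reachable.reachable_deleteEdges_or (v := v) (hT.connected b hb u hu)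
  refine ⟨fun hab => ⟨hab.symm.trans, hab.trans⟩, fun hiff => ?_⟩
  rcases hau with hau | hav
  · exact hau.trans (hiff.mp hau).symm
  · have hbv := hbu.resolve_left fun hbu => hbridge ((hiff.mpr hbu).symm.trans hav)
    exact hav.trans hbv.symm

theorem IsXTree.mem_pathEdges_iff (hT : IsXTree X G) {o a b : U} (ho : o ∈ G.support)
    (ha : a ∈ G.support) (hb : b ∈ G.support) (e : Sym2 U) :
    e ∈ pathEdges G a b ↔ ¬ (e ∈ pathEdges G o a ↔ e ∈ pathEdges G o b) := by
  by_cases he : e ∈ G.edgeSet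
  · induction e using Sym2.ind with
    | h u v =>
      simp only [mem_pathEdges_iff_not_reachable he, hT.reachable_deleteEdges_iff he ha hb,
        hT.reachable_deleteEdges_iff he ho ha, hT.reachable_deleteEdges_iff he ho hb]
      tauto
  · simp [pathEdges, he]

theorem pathEdges_subset_union_of_nonempty_inter {a b c d : U}
    (h : (pathEdges G a b ∩ pathEdges G c d).Nonempty) :
    pathEdges G a c ⊆ pathEdges G a b ∪ pathEdges G c d := by
  obtain ⟨⟨v, w⟩, hfab, hfcd⟩ := h
  intro e hac
  by_contra hout
  rw [Set.mem_union, not_or] at hout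
  -- walks avoiding `e` from `a` to `b` and from `c` to `d` both pass through `v`
  have reach_endpoint : ∀ {p q : U}, s(v, w) ∈ pathEdges G p q → e ∉ pathEdges G p q →
      (G.deleteEdges {e}).Reachable p v := by
    intro p q hf he
    obtain ⟨W⟩ := not_not.mp ((mem_pathEdges_iff_not_reachable hac.1).not.mp he)
    have hv : v ∈ (W.mapLe (G.deleteEdges_le {e})).support :=
      SimpleGraph.Walk.fst_mem_support_of_mem_edges _ (hf.2 _)
    rw [SimpleGraph.Walk.support_mapLe_eq_support] at hv
    exact ⟨W.takeUntil v hv⟩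
  exact (mem_pathEdges_iff_not_reachable hac.1).mp hac
    ((reach_endpoint hfab hout.1).trans (reach_endpoint hfcd hout.2).symm)

/-- `e` separates `{a, b}` from `{o, c}` and `f` separates `{a, c}` from `{o, b}`: the splits of
two edges of a tree never cross. -/
theorem IsXTree.not_crossing (hT : IsXTree X G) {o a b c : U} (ho : o ∈ G.support)
    (ha : a ∈ G.support) (hb : b ∈ G.support) (hc : c ∈ G.support) {e f : Sym2 U}
    (hea : e ∈ pathEdges G o a) (heb : e ∈ pathEdges G o b) (hec : e ∉ pathEdges G o c)
    (hfa : f ∈ pathEdges G o a) (hfc : f ∈ pathEdges G o c) (hfb : f ∉ pathEdges G o b) :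
    False := by
  have hfab : f ∈ pathEdges G a b := by simp [hT.mem_pathEdges_iff ho ha hb, hfa, hfb]
  have hfco : f ∈ pathEdges G c o := by rwa [pathEdges_comm]
  have heac : e ∈ pathEdges G a c := by simp [hT.mem_pathEdges_iff ho ha hc, hea, hec]
  rcases pathEdges_subset_union_of_nonempty_inter ⟨f, hfab, hfco⟩ heac with heab | heco
  · simp [hT.mem_pathEdges_iff ho ha hb, hea, heb] at heab
  · exact hec (by rwa [pathEdges_comm])

end PathEdges

section XTree

variable {X : Set U} {G : SimpleGraph U} {l : U}

theorem IsLeaf.exists_adj (hl : IsLeaf G l) : ∃ z, G.Adj l z := by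
  obtain ⟨z, hz⟩ := Set.ncard_eq_one.mp hl
  exact ⟨z, show z ∈ G.neighborSet l by simp [hz]⟩

theorem IsLeaf.eq_of_adj (hl : IsLeaf G l) {z z' : U} (hz : G.Adj l z) (hz' : G.Adj l z') :
    z = z' := by
  obtain ⟨w, hw⟩ := Set.ncard_eq_one.mp hl
  have hzw : z ∈ G.neighborSet l := hz
  have hz'w : z' ∈ G.neighborSet l := hz'
  rw [hw] at hzw hz'w
  exact hzw.trans hz'w.symm

theorem IsLeaf.mem_pathEdges (hl : IsLeaf G l) {z a : U} (hz : G.Adj l z) (hla : l ≠ a) :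
    s(l, z) ∈ pathEdges G l a := by
  refine ⟨hz, fun w => ?_⟩
  cases w with
  | nil => exact absurd rfl hla
  | cons h _ => simp [hl.eq_of_adj hz h]

theorem IsXTree.mem_support (hT : IsXTree X G) {a : U} (ha : a ∈ X) : a ∈ G.support := by
  rw [hT.leaves_eq] at ha
  obtain ⟨z, hz⟩ := IsLeaf.exists_adj (show IsLeaf G a from ha)
  exact hz.mem_support_left

theorem IsXTree.edgeSet_finite (hT : IsXTree X G) : G.edgeSet.Finite := by
  refine (Set.sym2_eq_mk_image (s := G.support) ▸
    (hT.support_finite.prod hT.support_finite).image _).subset ?_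
  rintro ⟨u, v⟩ (huv : G.Adj u v)
  exact ⟨huv.mem_support_left, huv.mem_support_right⟩

theorem IsXTree.eq_or_eq_of_isLeaf (hT : IsXTree X G) (hl : IsLeaf G l) {a b : U} {e : Sym2 U}
    (hle : l ∈ e) (he : e ∈ pathEdges G a b) (ha : a ∈ G.support) (hb : b ∈ G.support) :
    l = a ∨ l = b := by
  by_contra! hne
  obtain ⟨z, rfl⟩ := Sym2.mem_iff_exists.mp hle
  have hz : G.Adj l z := he.1
  rw [hT.mem_pathEdges_iff hz.mem_support_left ha hb] at he
  exact he (iff_of_true (hl.mem_pathEdges hz hne.1) (hl.mem_pathEdges hz hne.2))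

end XTree

/-- The set `M(a, b)` of edges separating `{x, x'}` from `{a, b}`, described from the base
point `x`. -/
def quartetEdges (G : SimpleGraph U) (x x' a b : U) : Set (Sym2 U) :=
  {e | e ∈ pathEdges G x a ∧ e ∈ pathEdges G x b ∧ e ∉ pathEdges G x x'}

/-- The edges separating `{x, a}` from `{x', b}`. -/
def crossEdges (G : SimpleGraph U) (x x' a b : U) : Set (Sym2 U) :=
  {e | e ∈ pathEdges G x x' ∧ e ∉ pathEdges G x a ∧ e ∈ pathEdges G x b}

section QuartetEdges

variable {X : Set U} {G : SimpleGraph U} {x x' a b : U}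

theorem quartetEdges_comm (G : SimpleGraph U) (x x' a b : U) :
    quartetEdges G x x' a b = quartetEdges G x x' b a :=
  Set.ext fun _ => and_left_comm

theorem quartetEdges_inter_subset (G : SimpleGraph U) (x x' a b c d : U) :
    quartetEdges G x x' a c ∩ quartetEdges G x x' b d ⊆ quartetEdges G x x' a b :=
  fun _ ⟨hac, hbd⟩ => ⟨hac.1, hbd.1, hac.2.2⟩

theorem ne_of_mem_quartetEdges {e : Sym2 U} (he : e ∈ quartetEdges G x x' a b) :
    a ≠ x ∧ a ≠ x' :=
  ⟨(ne_of_mem_pathEdges he.1).symm, by rintro rfl; exact he.2.2 he.1⟩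

theorem IsXTree.quartetEdges_finite (hT : IsXTree X G) : (quartetEdges G x x' a b).Finite :=
  hT.edgeSet_finite.subset fun _ he => he.1.1

theorem IsXTree.not_mem_pathEdges_of_mem_quartetEdges (hT : IsXTree X G) (hx : x ∈ G.support)
    (ha : a ∈ G.support) (hb : b ∈ G.support) {e : Sym2 U} (he : e ∈ quartetEdges G x x' a b) :
    e ∉ pathEdges G a b := by
  rw [hT.mem_pathEdges_iff hx ha hb, not_not]
  exact iff_of_true he.1 he.2.1

theorem IsXTree.quartetEdges_nonempty_of_displaysQ (hT : IsXTree X G) (hx : x ∈ G.support)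
    (hx' : x' ∈ G.support) (ha : a ∈ G.support) (h : DisplaysQ G x x' a b) :
    (quartetEdges G x x' a b).Nonempty := by
  obtain ⟨e, hxa, hxb, hx'a, -⟩ := h
  refine ⟨e, hxa, hxb, ?_⟩
  rw [hT.mem_pathEdges_iff ha hx hx', pathEdges_comm G a x, pathEdges_comm G a x', not_not]
  exact iff_of_true hxa hx'a

theorem IsXTree.disjoint_pathEdges_of_nonempty (hT : IsXTree X G) (hx : x ∈ G.support)
    (hx' : x' ∈ G.support) (ha : a ∈ G.support) (hb : b ∈ G.support)
    (h : (quartetEdges G x x' a b).Nonempty) :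
    Disjoint (pathEdges G x x') (pathEdges G a b) := by
  obtain ⟨g, hga, hgb, hgx'⟩ := h
  refine Set.disjoint_left.mpr fun e hex' hab => ?_
  rw [hT.mem_pathEdges_iff hx ha hb] at hab
  by_cases hea : e ∈ pathEdges G x a
  · exact hT.not_crossing hx ha hx' hb hea hex' (fun heb => hab (iff_of_true hea heb)) hga hgb hgx'
  · exact hT.not_crossing hx hb hx' ha (by tauto) hex' hea hgb hga hgx'

theorem IsXTree.crossEdges_eq_empty (hT : IsXTree X G) (hx : x ∈ G.support)
    (hx' : x' ∈ G.support) (ha : a ∈ G.support) (hb : b ∈ G.support)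
    (h : (quartetEdges G x x' a b).Nonempty) : crossEdges G x x' a b = ∅ := by
  refine Set.eq_empty_of_forall_notMem fun e ⟨hex', hea, heb⟩ => ?_
  refine Set.disjoint_left.mp (hT.disjoint_pathEdges_of_nonempty hx hx' ha hb h) hex' ?_
  rw [hT.mem_pathEdges_iff hx ha hb]
  tauto

theorem IsXTree.crossEdges_eq_empty_or (hT : IsXTree X G) (hx : x ∈ G.support)
    (hx' : x' ∈ G.support) (ha : a ∈ G.support) (hb : b ∈ G.support) :
    crossEdges G x x' a b = ∅ ∨ crossEdges G x x' b a = ∅ := by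
  by_contra! h
  obtain ⟨⟨e, hex', hea, heb⟩, ⟨f, hfx', hfb, hfa⟩⟩ := h
  exact hT.not_crossing hx hx' hb ha hex' heb hea hfx' hfa hfb

theorem IsXTree.quartetEdges_subset_or_subset (hT : IsXTree X G) {c : U} (hx : x ∈ G.support)
    (ha : a ∈ G.support) (hb : b ∈ G.support) (hc : c ∈ G.support) :
    quartetEdges G x x' a b ⊆ quartetEdges G x x' a c ∨
      quartetEdges G x x' a c ⊆ quartetEdges G x x' a b := by
  by_contra! h
  obtain ⟨⟨e, he, heN⟩, ⟨f, hf, hfN⟩⟩ := And.imp Set.not_subset.mp Set.not_subset.mp h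
  exact hT.not_crossing hx ha hb hc he.1 he.2.1 (fun hec => heN ⟨he.1, hec, he.2.2⟩)
    hf.1 hf.2.1 (fun hfb => hfN ⟨hf.1, hfb, hf.2.2⟩)

theorem IsXTree.quartetEdges_eq_of_ssubset (hT : IsXTree X G) {r : U} (hx : x ∈ G.support)
    (ha : a ∈ G.support) (hb : b ∈ G.support) (hr : r ∈ G.support)
    (h : quartetEdges G x x' b r ⊂ quartetEdges G x x' a r) :
    quartetEdges G x x' a b = quartetEdges G x x' b r := by
  obtain ⟨f, hf, hfN⟩ := Set.exists_of_ssubset h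
  refine subset_antisymm (fun e he => ?_)
    fun e he => quartetEdges_inter_subset G x x' a b r r ⟨h.subset he, he⟩
  by_contra heN
  exact hT.not_crossing hx ha hb hr he.1 he.2.1 (fun her => heN ⟨he.2.1, her, he.2.2⟩)
    hf.1 hf.2.1 (fun hfb => hfN ⟨hfb, hf.2.1, hf.2.2⟩)

end QuartetEdges

section Weights

theorem _root_.finsum_mem_le_finsum_mem_of_subset {α M : Type*} [AddCommMonoid M] [PartialOrder M]
    [IsOrderedAddMonoid M] {f : α → M} {s t : Set α}
    (hf : ∀ a, 0 ≤ f a) (hst : s ⊆ t) (ht : t.Finite) : ∑ᶠ a ∈ s, f a ≤ ∑ᶠ a ∈ t, f a := by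
  rw [← finsum_mem_add_sdiff hst ht]
  exact le_add_of_nonneg_right (finsum_nonneg fun a => finsum_nonneg fun _ => hf a)

theorem _root_.finsum_mem_lt_finsum_mem_of_subset {α M : Type*} [AddCommMonoid M] [PartialOrder M]
    [IsOrderedCancelAddMonoid M] {f : α → M} {s t : Set α}
    (hf : ∀ a, 0 ≤ f a) (hst : s ⊆ t) (ht : t.Finite) {a : α} (hat : a ∈ t) (has : a ∉ s)
    (ha : 0 < f a) : ∑ᶠ i ∈ s, f i < ∑ᶠ i ∈ t, f i :=
  calc ∑ᶠ i ∈ s, f i < f a + ∑ᶠ i ∈ s, f i := lt_add_of_pos_left _ ha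
    _ = ∑ᶠ i ∈ insert a s, f i := (finsum_mem_insert f has (ht.subset hst)).symm
    _ ≤ ∑ᶠ i ∈ t, f i := finsum_mem_le_finsum_mem_of_subset hf (Set.insert_subset hat hst) ht

theorem _root_.finsum_mem_eq_sum_indicator {α M : Type*} [AddCommMonoid M] {f : α → M} {s : Set α}
    {t : Finset α} (hst : s ⊆ t) : ∑ᶠ a ∈ s, f a = ∑ a ∈ t, s.indicator f a := by
  rw [finsum_mem_def]
  exact finsum_eq_sum_of_support_subset _ (Set.support_indicator_subset.trans hst)

variable {X : Set U} {G : SimpleGraph U} {ω : Sym2 U → ℝ} {x x' a b : U}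

theorem tdist_comm (G : SimpleGraph U) (ω : Sym2 U → ℝ) (a b : U) :
    tdist G ω a b = tdist G ω b a := by
  rw [tdist, pathEdges_comm, tdist]

theorem IsXTree.four_point_eq (hT : IsXTree X G) (hx : x ∈ G.support) (hx' : x' ∈ G.support)
    (ha : a ∈ G.support) (hb : b ∈ G.support) (ω : Sym2 U → ℝ) :
    tdist G ω x a + tdist G ω x' b - tdist G ω x x' - tdist G ω a b =
      2 * ∑ᶠ e ∈ quartetEdges G x x' a b, ω e - 2 * ∑ᶠ e ∈ crossEdges G x x' a b, ω e := by
  have hE : ∀ {S : Set (Sym2 U)}, S ⊆ G.edgeSet → S ⊆ hT.edgeSet_finite.toFinset := by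
    simp
  simp only [tdist, finsum_mem_eq_sum_indicator (hE fun _ (he : _ ∈ pathEdges G _ _) => he.1),
    finsum_mem_eq_sum_indicator (hE fun _ (he : _ ∈ quartetEdges G x x' a b) => he.1.1),
    finsum_mem_eq_sum_indicator (hE fun _ (he : _ ∈ crossEdges G x x' a b) => he.1.1),
    Finset.mul_sum, ← Finset.sum_add_distrib, ← Finset.sum_sub_distrib]
  refine Finset.sum_congr rfl fun e _ => ?_
  simp only [Set.indicator_apply, quartetEdges, crossEdges,
    hT.mem_pathEdges_iff hx hx' hb e, hT.mem_pathEdges_iff hx ha hb e]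
  by_cases s₀ : e ∈ pathEdges G x x' <;> by_cases sa : e ∈ pathEdges G x a <;>
    by_cases sb : e ∈ pathEdges G x b <;> simp [s₀, sa, sb] <;> ring

theorem IsXTree.Dq_eq (hT : IsXTree X G) (hω : IsWeighting G ω) (hx : x ∈ G.support)
    (hx' : x' ∈ G.support) (ha : a ∈ G.support) (hb : b ∈ G.support) :
    Dq G ω x x' a b = 2 * ∑ᶠ e ∈ quartetEdges G x x' a b, ω e := by
  have hab := hT.four_point_eq hx hx' ha hb ω
  have hba := hT.four_point_eq hx hx' hb ha ω
  rw [tdist_comm G ω b a, quartetEdges_comm G x x' b a] at hba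
  have hnonneg : ∀ S : Set (Sym2 U), 0 ≤ ∑ᶠ e ∈ S, ω e :=
    fun _ => finsum_nonneg fun e => finsum_nonneg fun _ => hω.nonneg e
  rw [Dq, ← max_sub_sub_right, ← max_sub_sub_right, hab, hba]
  rcases hT.crossEdges_eq_empty_or hx hx' ha hb with h | h
  · rw [h, finsum_mem_empty, max_eq_left] <;> linarith [hnonneg (crossEdges G x x' b a)]
  · rw [h, finsum_mem_empty, max_eq_right] <;> linarith [hnonneg (crossEdges G x x' a b)]

end Weights

section WeightedQuartets

variable {X : Set U} {G : SimpleGraph U} {ω : Sym2 U → ℝ} {x x' a b : U}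

theorem IsXTree.four_point_eq_of_nonempty (hT : IsXTree X G) (hx : x ∈ G.support)
    (hx' : x' ∈ G.support) (ha : a ∈ G.support) (hb : b ∈ G.support)
    (h : (quartetEdges G x x' a b).Nonempty) (ω : Sym2 U → ℝ) :
    tdist G ω x a + tdist G ω x' b - tdist G ω x x' - tdist G ω a b =
      2 * ∑ᶠ e ∈ quartetEdges G x x' a b, ω e := by
  rw [hT.four_point_eq hx hx' ha hb, hT.crossEdges_eq_empty hx hx' ha hb h, finsum_mem_empty,
    mul_zero, sub_zero]

theorem IsXTree.four_point_eq_of_pos (hT : IsXTree X G) (hω : IsWeighting G ω)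
    (hx : x ∈ G.support) (hx' : x' ∈ G.support) (ha : a ∈ G.support) (hb : b ∈ G.support)
    (h : 0 < tdist G ω x a + tdist G ω x' b - tdist G ω x x' - tdist G ω a b) :
    tdist G ω x a + tdist G ω x' b - tdist G ω x x' - tdist G ω a b =
      2 * ∑ᶠ e ∈ quartetEdges G x x' a b, ω e := by
  refine hT.four_point_eq_of_nonempty hx hx' ha hb (Set.nonempty_iff_ne_empty.mpr fun hM => ?_) ω
  have hC : 0 ≤ ∑ᶠ e ∈ crossEdges G x x' a b, ω e :=
    finsum_nonneg fun e => finsum_nonneg fun _ => hω.nonneg e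
  rw [hT.four_point_eq hx hx' ha hb, hM, finsum_mem_empty] at h
  linarith

theorem IsXTree.pos_of_mem_quartetEdges (hT : IsXTree X G) (hω : IsProperWeighting G ω)
    (hx : x ∈ G.support) (hx' : x' ∈ G.support) (ha : a ∈ G.support) (hb : b ∈ G.support)
    (hxx' : x ≠ x') (hab : a ≠ b) {e : Sym2 U} (he : e ∈ quartetEdges G x x' a b) : 0 < ω e := by
  obtain ⟨hxa, hxb, hxx'e⟩ := he
  refine hω.interior_pos e hxa.1 fun l hl hleaf => ?_
  have hx'a : e ∈ pathEdges G x' a := by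
    rw [hT.mem_pathEdges_iff hx hx' ha]
    tauto
  rcases hT.eq_or_eq_of_isLeaf hleaf hl hxa hx ha with rfl | rfl
  · rcases hT.eq_or_eq_of_isLeaf hleaf hl hx'a hx' ha with h | h
    exacts [hxx' h, ne_of_mem_pathEdges hxa h]
  · rcases hT.eq_or_eq_of_isLeaf hleaf hl hxb hx hb with h | h
    exacts [ne_of_mem_pathEdges hxa h.symm, hab h]

theorem IsXTree.weight_lt_of_ssubset (hT : IsXTree X G) (hω : IsProperWeighting G ω)
    {c d : U} (hx : x ∈ G.support) (hx' : x' ∈ G.support) (ha : a ∈ G.support)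
    (hb : b ∈ G.support) (hxx' : x ≠ x') (hab : a ≠ b)
    (h : quartetEdges G x x' c d ⊂ quartetEdges G x x' a b) :
    ∑ᶠ e ∈ quartetEdges G x x' c d, ω e < ∑ᶠ e ∈ quartetEdges G x x' a b, ω e := by
  obtain ⟨f, hf, hfN⟩ := Set.exists_of_ssubset h
  exact finsum_mem_lt_finsum_mem_of_subset hω.nonneg h.subset hT.quartetEdges_finite hf hfN
    (hT.pos_of_mem_quartetEdges hω hx hx' ha hb hxx' hab hf)

theorem IsXTree.quartetEdges_eq_of_weight_lt (hT : IsXTree X G) (hω : IsWeighting G ω) {c : U}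
    (hx : x ∈ G.support) (ha : a ∈ G.support) (hb : b ∈ G.support) (hc : c ∈ G.support)
    (h : ∑ᶠ e ∈ quartetEdges G x x' b c, ω e < ∑ᶠ e ∈ quartetEdges G x x' a b, ω e) :
    quartetEdges G x x' a c = quartetEdges G x x' b c := by
  rw [quartetEdges_comm G x x' a b] at h
  rcases hT.quartetEdges_subset_or_subset (x' := x') hx hb ha hc with hsub | hsub
  · exact absurd (finsum_mem_le_finsum_mem_of_subset hω.nonneg hsub hT.quartetEdges_finite)
      h.not_ge
  · have hss : quartetEdges G x x' c b ⊂ quartetEdges G x x' a b := by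
      rw [quartetEdges_comm G x x' c b, quartetEdges_comm G x x' a b]
      exact hsub.ssubset_of_ne fun heq => h.ne (by rw [heq])
    rw [hT.quartetEdges_eq_of_ssubset hx ha hc hb hss, quartetEdges_comm]

end WeightedQuartets

/-- The leaves below the branching point of `y` and `y'`, seen from `x` and `x'`, on the side
of `y`. -/
def branch (G : SimpleGraph U) (X : Set U) (x x' y y' : U) : Set U :=
  {z | z ∈ X ∧ quartetEdges G x x' y y' ⊂ quartetEdges G x x' z y}

def branches (G : SimpleGraph U) (X : Set U) (x x' y y' : U) : Set U :=
  branch G X x x' y y' ∪ branch G X x x' y' y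

section Branch

variable {X : Set U} {G : SimpleGraph U} {x x' y y' : U}

theorem branch_subset : branch G X x x' y y' ⊆ X \ {x, x'} := by
  rintro z ⟨hzX, hz⟩
  obtain ⟨e, he, -⟩ := Set.exists_of_ssubset hz
  simpa [hzX] using ne_of_mem_quartetEdges he

theorem branches_subset : branches G X x x' y y' ⊆ X \ {x, x'} :=
  Set.union_subset branch_subset branch_subset

theorem IsXTree.mem_branch_self (hT : IsXTree X G) (hx : x ∈ X) (hx' : x' ∈ X)
    (hy : y ∈ X \ {x, x'}) (hy' : y' ∈ X) (hyy' : y ≠ y') : y ∈ branch G X x x' y y' := by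
  obtain ⟨hyX, hyx⟩ := hy
  simp only [Set.mem_insert_iff, Set.mem_singleton_iff, not_or] at hyx
  have hleaf : IsLeaf G y := by rw [hT.leaves_eq] at hyX; exact hyX
  obtain ⟨z, hz⟩ := hleaf.exists_adj
  have hpend : s(y, z) ∈ pathEdges G x y := by
    rw [pathEdges_comm]
    exact hleaf.mem_pathEdges hz hyx.1
  have hend : ∀ {c : U}, c ∈ X → s(y, z) ∈ pathEdges G x c → y = x ∨ y = c := fun hc hp =>
    hT.eq_or_eq_of_isLeaf hleaf (Sym2.mem_mk_left y z) hp (hT.mem_support hx) (hT.mem_support hc)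
  have hsub : quartetEdges G x x' y y' ⊆ quartetEdges G x x' y y :=
    fun e he => ⟨he.1, he.1, he.2.2⟩
  refine ⟨hyX, (Set.ssubset_iff_of_subset hsub).mpr ⟨s(y, z), ⟨hpend, hpend, fun h => ?_⟩, ?_⟩⟩
  · exact (hend hx' h).elim hyx.1 hyx.2
  · exact fun h => (hend hy' h.2.1).elim hyx.1 hyy'

theorem IsXTree.quartetEdges_eq_of_mem_branch (hT : IsXTree X G) (hx : x ∈ X) (hy : y ∈ X)
    (hy' : y' ∈ X) {z : U} (hz : z ∈ branch G X x x' y y') :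
    quartetEdges G x x' z y' = quartetEdges G x x' y y' := by
  have hzy := hz.2
  rw [quartetEdges_comm G x x' y y'] at hzy ⊢
  exact hT.quartetEdges_eq_of_ssubset (hT.mem_support hx) (hT.mem_support hz.1)
    (hT.mem_support hy') (hT.mem_support hy) hzy

theorem IsXTree.disjoint_branch (hT : IsXTree X G) (hx : x ∈ X) (hy : y ∈ X) (hy' : y' ∈ X) :
    Disjoint (branch G X x x' y y') (branch G X x x' y' y) := by
  refine Set.disjoint_left.mpr fun z hz hz' => (hz'.2).ne ?_
  rw [hT.quartetEdges_eq_of_mem_branch hx hy hy' hz, quartetEdges_comm]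

theorem IsXTree.quartetEdges_eq_of_mem_branch_of_mem_branch (hT : IsXTree X G) (hx : x ∈ X)
    (hy : y ∈ X) (hy' : y' ∈ X) {u v : U} (hu : u ∈ branch G X x x' y y')
    (hv : v ∈ branch G X x x' y' y) :
    quartetEdges G x x' u v = quartetEdges G x x' y y' := by
  have huy' := hT.quartetEdges_eq_of_mem_branch hx hy hy' hu
  have hvy' : quartetEdges G x x' u y' ⊂ quartetEdges G x x' v y' := by
    rw [huy', quartetEdges_comm G x x' y y']
    exact hv.2
  rw [quartetEdges_comm, hT.quartetEdges_eq_of_ssubset (hT.mem_support hx) (hT.mem_support hv.1)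
    (hT.mem_support hu.1) (hT.mem_support hy') hvy', huy']

theorem IsXTree.branch_subset_branch (hT : IsXTree X G) (hx : x ∈ X) (hy : y ∈ X) {u : U}
    (hu : u ∈ branch G X x x' y y') :
    branch G X x x' y u ∪ branch G X x x' u y ⊆ branch G X x x' y y' := by
  have hyu : quartetEdges G x x' y y' ⊂ quartetEdges G x x' y u := by
    rw [quartetEdges_comm G x x' y u]
    exact hu.2
  rintro z (⟨hzX, hz⟩ | ⟨hzX, hz⟩)
  · exact ⟨hzX, hyu.trans hz⟩
  · refine ⟨hzX, ?_⟩
    rw [quartetEdges_comm G x x' u y] at hz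
    rwa [hT.quartetEdges_eq_of_ssubset (hT.mem_support hx) (hT.mem_support hzX)
      (hT.mem_support hy) (hT.mem_support hu.1) hz]

theorem IsXTree.quartetEdges_subset_of_not_mem_branch (hT : IsXTree X G) (hx : x ∈ X)
    (hy : y ∈ X) (hy' : y' ∈ X) {a b : U} (ha : a ∈ branch G X x x' y y') (hb : b ∈ X)
    (hbB : b ∉ branch G X x x' y y') :
    quartetEdges G x x' a b ⊆ quartetEdges G x x' y y' := by
  have hby : quartetEdges G x x' b y ⊆ quartetEdges G x x' y y' := by
    rcases hT.quartetEdges_subset_or_subset (x' := x') (hT.mem_support hx) (hT.mem_support hy)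
      (hT.mem_support hb) (hT.mem_support hy') with hsub | hsub
    · rwa [quartetEdges_comm G x x' y b] at hsub
    · rw [quartetEdges_comm G x x' y b] at hsub
      by_contra hne
      exact hbB ⟨hb, hsub.ssubset_of_not_subset hne⟩
  rw [hT.quartetEdges_eq_of_ssubset (hT.mem_support hx) (hT.mem_support ha.1)
    (hT.mem_support hb) (hT.mem_support hy) (hby.trans_ssubset ha.2)]
  exact hby

theorem IsXTree.quartetEdges_subset_of_mem_branches (hT : IsXTree X G) (hx : x ∈ X)
    (hy : y ∈ X) (hy' : y' ∈ X) {a b : U} (ha : a ∈ branches G X x x' y y')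
    (hb : b ∈ X \ branches G X x x' y y') :
    quartetEdges G x x' a b ⊆ quartetEdges G x x' y y' := by
  obtain ⟨hbX, hbA⟩ := hb
  rcases ha with ha | ha
  · exact hT.quartetEdges_subset_of_not_mem_branch hx hy hy' ha hbX fun h => hbA (Or.inl h)
  · exact quartetEdges_comm G x x' y' y ▸
      hT.quartetEdges_subset_of_not_mem_branch hx hy' hy ha hbX fun h => hbA (Or.inr h)

theorem subset_quartetEdges_of_mem_branches {a a' : U} (ha : a ∈ branches G X x x' y y')
    (ha' : a' ∈ branches G X x x' y y') :
    quartetEdges G x x' y y' ⊆ quartetEdges G x x' a a' := by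
  have hsup : ∀ {c : U}, c ∈ branches G X x x' y y' →
      ∃ r, quartetEdges G x x' y y' ⊆ quartetEdges G x x' c r := by
    rintro c (hc | hc)
    exacts [⟨y, hc.2.subset⟩, ⟨y', quartetEdges_comm G x x' y' y ▸ hc.2.subset⟩]
  obtain ⟨r, hr⟩ := hsup ha
  obtain ⟨r', hr'⟩ := hsup ha'
  exact fun e he => quartetEdges_inter_subset G x x' a a' r r' ⟨hr he, hr' he⟩

theorem IsXTree.not_displaysQ_of_mem_branches (hT : IsXTree X G) (hx : x ∈ X) (hx' : x' ∈ X)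
    (hy : y ∈ X) (hy' : y' ∈ X) (hM : (quartetEdges G x x' y y').Nonempty) {a a' b b' : U}
    (ha : a ∈ branches G X x x' y y') (ha' : a' ∈ branches G X x x' y y')
    (hb : b ∈ X \ branches G X x x' y y') (hb' : b' ∈ X \ branches G X x x' y y') :
    ¬ DisplaysQ G a b a' b' := by
  have hA : ∀ {c : U}, c ∈ branches G X x x' y y' → c ∈ G.support :=
    fun hc => hT.mem_support (branches_subset hc).1
  have hxS := hT.mem_support hx
  have haa' := subset_quartetEdges_of_mem_branches ha ha'
  rintro ⟨e, haa'e, hab'e, hba'e, -⟩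
  have hex : e ∉ pathEdges G x x' := fun h => Set.disjoint_left.mp
    (hT.disjoint_pathEdges_of_nonempty hxS (hT.mem_support hx') (hA ha) (hA ha') (hM.mono haa'))
    h haa'e
  have hcases : e ∈ quartetEdges G x x' a b ∨ e ∈ quartetEdges G x x' a' b' := by
    rw [hT.mem_pathEdges_iff hxS (hA ha) (hA ha')] at haa'e
    rw [hT.mem_pathEdges_iff hxS (hA ha) (hT.mem_support hb'.1)] at hab'e
    rw [hT.mem_pathEdges_iff hxS (hT.mem_support hb.1) (hA ha')] at hba'e
    by_cases hea : e ∈ pathEdges G x a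
    · exact Or.inl ⟨hea, by tauto, hex⟩
    · exact Or.inr ⟨by tauto, by tauto, hex⟩
  refine hT.not_mem_pathEdges_of_mem_quartetEdges (x' := x') hxS (hA ha) (hA ha') ?_ haa'e
  rcases hcases with he | he
  exacts [haa' (hT.quartetEdges_subset_of_mem_branches hx hy hy' ha hb he),
    haa' (hT.quartetEdges_subset_of_mem_branches hx hy hy' ha' hb' he)]

theorem IsXTree.virtualSplit_branches (hT : IsXTree X G) (hx : x ∈ X) (hx' : x' ∈ X)
    (hy : y ∈ X \ {x, x'}) (hy' : y' ∈ X) (hyy' : y ≠ y')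
    (hM : (quartetEdges G x x' y y').Nonempty) :
    VirtualSplit X G (branches G X x x' y y') (X \ branches G X x x' y y') := by
  have hxA : x ∉ branches G X x x' y y' := fun h => (branches_subset h).2 (by simp)
  refine ⟨⟨y, Or.inl (hT.mem_branch_self hx hx' hy hy' hyy')⟩, ⟨x, hx, hxA⟩,
    Set.disjoint_sdiff_right, Set.union_sdiff_cancel fun _ h => (branches_subset h).1,
    fun a ha a' ha' b hb b' hb' _ _ => ⟨?_, ?_⟩⟩
  · exact hT.not_displaysQ_of_mem_branches hx hx' hy.1 hy' hM ha ha' hb hb'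
  · exact hT.not_displaysQ_of_mem_branches hx hx' hy.1 hy' hM ha ha' hb' hb

theorem branches_comm (G : SimpleGraph U) (X : Set U) (x x' y y' : U) :
    branches G X x x' y y' = branches G X x x' y' y :=
  Set.union_comm _ _

theorem IsXTree.ncard_branches_lt (hT : IsXTree X G) (hx : x ∈ X) (hy : y ∈ X) (hy' : y' ∈ X)
    (hy'B : y' ∈ branch G X x x' y' y) {u : U} (hu : u ∈ branch G X x x' y y') :
    (branches G X x x' y u).ncard < (branches G X x x' y y').ncard := by
  have hsub := hT.branch_subset_branch hx hy hu
  refine Set.ncard_lt_ncard ((Set.ssubset_iff_of_subset (hsub.trans Set.subset_union_left)).mpr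
    ⟨y', Or.inr hy'B, fun h => Set.disjoint_right.mp (hT.disjoint_branch hx hy hy') hy'B (hsub h)⟩)
    (hT.support_finite.subset fun _ h => hT.mem_support (branches_subset h).1)

end Branch

theorem ConnectedOn.exists_adj {α : Type*} {Γ : SimpleGraph α} {A B : Set α}
    (h : ConnectedOn Γ A) {a b : α} (ha : a ∈ A) (hb : b ∈ A) (haB : a ∈ B) (hbB : b ∉ B) :
    ∃ u ∈ B, ∃ v ∈ A, v ∉ B ∧ Γ.Adj u v := by
  obtain ⟨w⟩ := h a ha b hb
  obtain ⟨d, -, hd, hd'⟩ := w.exists_boundary_dart B haB hbB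
  exact ⟨d.fst, hd, d.snd, d.adj.2.2, hd', d.adj.1⟩

section Isometric

variable {X : Set U} {G G' : SimpleGraph U} {ω ω' : Sym2 U → ℝ} {L : Set (Sym2 U)} {x x' : U}

theorem weight_quartetEdges_eq_of_cords (hT : IsXTree X G) (hT' : IsXTree X G')
    (hω : IsProperWeighting G ω) (hω' : IsWeighting G' ω') (hiso : LIso L G ω G' ω')
    (hx : x ∈ X) (hx' : x' ∈ X) (hxx' : x ≠ x') {u v : U} (hu : u ∈ X) (hv : v ∈ X)
    (huv : u ≠ v) (hxx'L : s(x, x') ∈ L) (hxu : s(x, u) ∈ L) (hx'v : s(x', v) ∈ L)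
    (huvL : s(u, v) ∈ L) (hM : (quartetEdges G x x' u v).Nonempty) :
    ∑ᶠ e ∈ quartetEdges G' x x' u v, ω' e = ∑ᶠ e ∈ quartetEdges G x x' u v, ω e := by
  have hQ := hT.four_point_eq_of_nonempty (hT.mem_support hx) (hT.mem_support hx')
    (hT.mem_support hu) (hT.mem_support hv) hM ω
  have hpos : 0 < ∑ᶠ e ∈ quartetEdges G x x' u v, ω e := by
    obtain ⟨f, hf⟩ := hM
    simpa using finsum_mem_lt_finsum_mem_of_subset hω.nonneg (Set.empty_subset _)
      hT.quartetEdges_finite hf (Set.notMem_empty f)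
      (hT.pos_of_mem_quartetEdges hω (hT.mem_support hx) (hT.mem_support hx')
        (hT.mem_support hu) (hT.mem_support hv) hxx' huv hf)
  rw [hiso x u hxu, hiso x' v hx'v, hiso x x' hxx'L, hiso u v huvL] at hQ
  rw [hT'.four_point_eq_of_pos hω' (hT'.mem_support hx) (hT'.mem_support hx')
    (hT'.mem_support hu) (hT'.mem_support hv) (by linarith)] at hQ
  linarith

theorem weight_quartetEdges_eq_of_adj (hT : IsXTree X G) (hT' : IsXTree X G')
    (hω : IsProperWeighting G ω) (hω' : IsWeighting G' ω') (hiso : LIso L G ω G' ω')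
    (hcord : s(x, x') ∈ L) {u v : U} (hadj : (cordGraphC X G L x x').Adj u v) :
    ∑ᶠ e ∈ quartetEdges G' x x' u v, ω' e = ∑ᶠ e ∈ quartetEdges G x x' u v, ω e := by
  obtain ⟨huv, -, -, -, -, huvL, ⟨hx, hx', hu, hv, ⟨hxx', -⟩, hdisp⟩, hcords⟩ := hadj
  have hM := hT.quartetEdges_nonempty_of_displaysQ (hT.mem_support hx) (hT.mem_support hx')
    (hT.mem_support hu) hdisp
  rcases hcords with ⟨hxu, hx'v⟩ | ⟨hxv, hx'u⟩
  · exact weight_quartetEdges_eq_of_cords hT hT' hω hω' hiso hx hx' hxx' hu hv huv hcord hxu hx'v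
      huvL hM
  · rw [quartetEdges_comm G x x' u v] at hM
    rw [quartetEdges_comm G' x x' u v, quartetEdges_comm G x x' u v]
    exact weight_quartetEdges_eq_of_cords hT hT' hω hω' hiso hx hx' hxx' hv hu huv.symm hcord
      hxv hx'u (Sym2.eq_swap ▸ huvL) hM

theorem weight_quartetEdges_eq_of_mem_branch (hT : IsXTree X G) (hT' : IsXTree X G')
    (hω : IsProperWeighting G ω) (hω' : IsWeighting G' ω') (hx : x ∈ X) (hx' : x' ∈ X)
    (hxx' : x ≠ x') {y y' u v : U} (hy : y ∈ X) (hv : v ∈ X) (hu : u ∈ branch G X x x' y y')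
    (hyu : u ≠ y →
      ∑ᶠ e ∈ quartetEdges G' x x' y u, ω' e = ∑ᶠ e ∈ quartetEdges G x x' y u, ω e)
    (huv : ∑ᶠ e ∈ quartetEdges G' x x' u v, ω' e = ∑ᶠ e ∈ quartetEdges G x x' y y', ω e) :
    ∑ᶠ e ∈ quartetEdges G' x x' y v, ω' e = ∑ᶠ e ∈ quartetEdges G x x' y y', ω e := by
  rcases eq_or_ne u y with rfl | huy
  · exact huv
  have hlt := hT.weight_lt_of_ssubset hω (hT.mem_support hx) (hT.mem_support hx')
    (hT.mem_support hu.1) (hT.mem_support hy) hxx' huy hu.2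
  rw [quartetEdges_comm G x x' u y, ← hyu huy, ← huv] at hlt
  rw [hT'.quartetEdges_eq_of_weight_lt hω' (hT'.mem_support hx) (hT'.mem_support hy)
    (hT'.mem_support hu.1) (hT'.mem_support hv) hlt, huv]

theorem weight_quartetEdges_eq (hT : IsXTree X G) (hT' : IsXTree X G')
    (hω : IsProperWeighting G ω) (hω' : IsProperWeighting G' ω') (hiso : LIso L G ω G' ω')
    (hx : x ∈ X) (hx' : x' ∈ X) (hxx' : x ≠ x') (hcord : s(x, x') ∈ L)
    (hconn : ∀ A : Set U, A ⊆ X \ {x, x'} → VirtualSplit X G A (X \ A) →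
      ConnectedOn (cordGraphC X G L x x') A)
    {y y' : U} (hy : y ∈ X \ {x, x'}) (hy' : y' ∈ X \ {x, x'}) (hyy' : y ≠ y')
    (hM : (quartetEdges G x x' y y').Nonempty) :
    ∑ᶠ e ∈ quartetEdges G' x x' y y', ω' e = ∑ᶠ e ∈ quartetEdges G x x' y y', ω e := by
  induction hn : (branches G X x x' y y').ncard using Nat.strong_induction_on
    generalizing y y' with
  | _ n IH =>
  have hyB := hT.mem_branch_self hx hx' hy hy'.1 hyy'
  have hy'B := hT.mem_branch_self hx hx' hy' hy.1 hyy'.symm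
  have hy'nB := Set.disjoint_right.mp (hT.disjoint_branch hx hy.1 hy'.1) hy'B
  obtain ⟨u, hu, v, hvA, hvB, hadj⟩ :=
    (hconn _ branches_subset (hT.virtualSplit_branches hx hx' hy hy'.1 hyy' hM)).exists_adj
      (Or.inl hyB) (Or.inr hy'B) hyB hy'nB
  have hv : v ∈ branch G X x x' y' y := hvA.resolve_left hvB
  have huv : ∑ᶠ e ∈ quartetEdges G' x x' u v, ω' e = ∑ᶠ e ∈ quartetEdges G x x' y y', ω e := by
    rw [weight_quartetEdges_eq_of_adj hT hT' hω hω'.toIsWeighting hiso hcord hadj,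
      hT.quartetEdges_eq_of_mem_branch_of_mem_branch hx hy.1 hy'.1 hu hv]
  have ih : ∀ {c c' w : U}, c ∈ X \ {x, x'} → c' ∈ X → c' ∈ branch G X x x' c' c →
      (branches G X x x' c c').ncard = n → w ∈ branch G X x x' c c' → w ≠ c →
      ∑ᶠ e ∈ quartetEdges G' x x' c w, ω' e = ∑ᶠ e ∈ quartetEdges G x x' c w, ω e := by
    intro c c' w hc hc' hc'B hcn hw hwc
    obtain ⟨e, he, -⟩ := Set.exists_of_ssubset hw.2
    exact IH _ (hcn ▸ hT.ncard_branches_lt hx hc.1 hc' hc'B hw) hc (branch_subset hw) hwc.symm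
      ⟨e, quartetEdges_comm G x x' w c ▸ he⟩ rfl
  have hyv := weight_quartetEdges_eq_of_mem_branch hT hT' hω hω'.toIsWeighting hx hx' hxx' hy.1
    hv.1 hu (ih hy hy'.1 hy'B hn hu) huv
  have hy'y := weight_quartetEdges_eq_of_mem_branch hT hT' hω hω'.toIsWeighting hx hx' hxx'
    hy'.1 hy.1 hv (ih hy' hy.1 hyB (branches_comm G X x x' y y' ▸ hn) hv)
    (by rwa [quartetEdges_comm G' x x' v y, quartetEdges_comm G x x' y' y])
  rwa [quartetEdges_comm G' x x' y' y, quartetEdges_comm G x x' y' y] at hy'y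

end Isometric

theorem cord_quartet_values_agree_general {U : Type}
    (X : Set U) (G : SimpleGraph U)
    (hT : IsXTree X G)
    (L : Set (Sym2 U))
    (x x' : U) (hcord : s(x, x') ∈ L)
    (hconn : ∀ A : Set U, A ⊆ X \ {x, x'} → VirtualSplit X G A (X \ A) →
      ConnectedOn (cordGraphC X G L x x') A)
    (ω : Sym2 U → ℝ) (hω : IsProperWeighting G ω)
    (G' : SimpleGraph U) (hT' : IsXTree X G')
    (ω' : Sym2 U → ℝ) (hω' : IsProperWeighting G' ω')
    (hiso : LIso L G ω G' ω') :
    ∀ y y' : U, y ∈ X \ ({x, x'} : Set U) → y' ∈ X \ ({x, x'} : Set U) →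
      y ≠ y' → QuartetOf X G x x' y y' →
      Dq G ω x x' y y' = Dq G' ω' x x' y y' := by
  rintro y y' hy hy' hyy' ⟨hx, hx', -, -, ⟨hxx', -⟩, hdisp⟩
  have hM := hT.quartetEdges_nonempty_of_displaysQ (hT.mem_support hx) (hT.mem_support hx')
    (hT.mem_support hy.1) hdisp
  rw [hT.Dq_eq hω.toIsWeighting (hT.mem_support hx) (hT.mem_support hx') (hT.mem_support hy.1)
      (hT.mem_support hy'.1),
    hT'.Dq_eq hω'.toIsWeighting (hT'.mem_support hx) (hT'.mem_support hx')
      (hT'.mem_support hy.1) (hT'.mem_support hy'.1),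
    weight_quartetEdges_eq hT hT' hω hω' hiso hx hx' hxx' hcord hconn hy hy' hyy' hM]

/-- Theorem 3, first part: under the connectivity assumption on `Γ(L, c)`
for the cord `c = x x' ∈ L`, any `L`-isometric properly edge-weighted
`X`-trees `(T,ω)`, `(T',ω')` satisfy `D_ω(xx'|yy') = D_{ω'}(xx'|yy')` for all
distinct `y, y' ∈ X − {x,x'}` with `xx' ‖ yy' ∈ Q(T)`. -/
theorem cord_quartet_values_agree {U : Type}
    (X : Set U) (G : SimpleGraph U)
    (hXfin : X.Finite) (hX3 : 3 ≤ X.ncard) (hT : IsXTree X G)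
    (L : Set (Sym2 U)) (hL : IsCordSet X L) (hcup : cup L = X)
    (x x' : U) (hxx' : x ≠ x') (hcord : s(x, x') ∈ L)
    (hconn : ∀ A : Set U, A ⊆ X \ {x, x'} → VirtualSplit X G A (X \ A) →
      ConnectedOn (cordGraphC X G L x x') A)
    (ω : Sym2 U → ℝ) (hω : IsProperWeighting G ω)
    (G' : SimpleGraph U) (hT' : IsXTree X G')
    (ω' : Sym2 U → ℝ) (hω' : IsProperWeighting G' ω')
    (hiso : LIso L G ω G' ω') :
    ∀ y y' : U, y ∈ X \ ({x, x'} : Set U) → y' ∈ X \ ({x, x'} : Set U) →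
      y ≠ y' → QuartetOf X G x x' y y' →
      Dq G ω x x' y y' = Dq G' ω' x x' y y' :=
  cord_quartet_values_agree_general X G hT L x x' hcord hconn ω hω G' hT' ω' hω' hiso

end Lasso
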